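/- Let f be a real, even, centered trigonometric polynomial of degree D, not identically zero, and let (a_n) be a sequence of positive integers such that for all d, d' ∈ {1,…,D}, the number of pairs (ℓ,ℓ') ∈ {1,…,n}^2 with ℓ ≠ ℓ' and d a_ℓ = d' a_{ℓ'} is o(n). Then there exists a constant c = c(f,a) > 0 such that E[S_n^2] ≥ c·n for all n, where S_n = Σ_{j=1}^n f(a_j U), U ~ Unif(0,1). -/

import Mathlib

/-!
Since `c` is even with `c 0 = 0`, `f x = ∑_{d=1}^D 2 c_d cos (2π d x)`, and orthogonality of the
cosines gives `E[S_n²] = 2 ∑ c_d c_{d'}` over the pairs of terms `(j, d), (j', d')` with equal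
frequency `d a_j = d' a_{j'}`. The diagonal pairs `j = j'` contribute `n ∑ c_d²`, the
off-diagonal ones are bounded by the coincidence counts, which are `o(n)`; so
`E[S_n²] ≥ (∑ c_d²) n` for large `n`.
For the finitely many remaining `n ≥ 1` it suffices that `E[S_n²] > 0`: grouping the terms by
frequency writes `E[S_n²]` as a sum of squares, and at the top frequency `d₀ · max_{j ≤ n} a_j`
(`d₀` the largest `d` with `c_d ≠ 0`) the grouped coefficient is a positive multiple of `c_{d₀}`.
-/

open Real Filter Finset Asymptotics

theorem Finset.sum_Icc_neg_of_even {M : Type*} [AddCommMonoid M] (g : ℤ → M)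
    (hg : ∀ d, g (-d) = g d) (n : ℕ) :
    ∑ d ∈ Icc (-(n : ℤ)) n, g d = g 0 + 2 • ∑ d ∈ Icc (1 : ℤ) n, g d := by
  have hpos : (Icc (-(n : ℤ)) n).filter (0 < ·) = Icc (1 : ℤ) n := by
    ext d; simp only [mem_filter, mem_Icc]; omega
  have hnonpos : ∑ d ∈ (Icc (-(n : ℤ)) n).filter (¬ 0 < ·), g d =
      ∑ d ∈ insert 0 (Icc (1 : ℤ) n), g d :=
    sum_nbij' (- ·) (- ·) (fun d hd => by simp at hd ⊢; omega) (fun d hd => by simp at hd ⊢; omega)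
      (fun _ _ => neg_neg _) (fun _ _ => neg_neg _) (fun d _ => (hg d).symm)
  rw [← sum_filter_add_sum_filter_not _ (0 < ·), hpos, hnonpos, sum_insert (by simp), two_nsmul]
  abel

lemma integral_cos_two_pi_int_mul (m : ℤ) :
    ∫ x in (0 : ℝ)..1, cos (2 * π * m * x) = if m = 0 then 1 else 0 := by
  split_ifs with hm
  · simp [hm]
  have hm' : 2 * π * m ≠ 0 := by
    have : (m : ℝ) ≠ 0 := by exact_mod_cast hm
    positivity
  rw [intervalIntegral.integral_comp_mul_left (fun x => cos x) hm', integral_cos, mul_zero,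
    sin_zero, mul_one, show 2 * π * (m : ℝ) = (2 * m : ℤ) * π by push_cast; ring, sin_int_mul_pi]
  simp

lemma integral_cos_mul_cos_two_pi_int_mul (m m' : ℤ) :
    ∫ x in (0 : ℝ)..1, cos (2 * π * m * x) * cos (2 * π * m' * x) =
      ((if m = m' then 1 else 0) + if m = -m' then 1 else 0) / 2 := by
  have hprod : ∀ x : ℝ, cos (2 * π * m * x) * cos (2 * π * m' * x) =
      (cos (2 * π * (m - m' : ℤ) * x) + cos (2 * π * (m + m' : ℤ) * x)) / 2 := fun x => by
    push_cast
    rw [show 2 * π * (m - m' : ℝ) * x = 2 * π * m * x - 2 * π * m' * x by ring,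
      show 2 * π * (m + m' : ℝ) * x = 2 * π * m * x + 2 * π * m' * x by ring, cos_sub, cos_add]
    ring
  simp_rw [hprod]
  rw [intervalIntegral.integral_div,
    intervalIntegral.integral_add (Continuous.intervalIntegrable (by fun_prop) _ _)
      (Continuous.intervalIntegrable (by fun_prop) _ _),
    integral_cos_two_pi_int_mul, integral_cos_two_pi_int_mul]
  simp only [sub_eq_zero, add_eq_zero_iff_eq_neg]

lemma integral_sq_sum_cos_of_pos {ι : Type*} (s : Finset ι) (b : ι → ℝ) (k : ι → ℤ)
    (hk : ∀ i ∈ s, 0 < k i) :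
    ∫ x in (0 : ℝ)..1, (∑ i ∈ s, b i * cos (2 * π * k i * x)) ^ 2 =
      (∑ i ∈ s, ∑ j ∈ s, if k i = k j then b i * b j else 0) / 2 := by
  simp_rw [sq, sum_mul_sum]
  rw [intervalIntegral.integral_finsetSum fun i _ => by
    apply Continuous.intervalIntegrable; fun_prop, sum_div]
  refine sum_congr rfl fun i hi => ?_
  rw [intervalIntegral.integral_finsetSum fun j _ => by
    apply Continuous.intervalIntegrable; fun_prop, sum_div]
  refine sum_congr rfl fun j hj => ?_
  have hne : k i ≠ -k j := by linarith [hk i hi, hk j hj]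
  simp_rw [mul_mul_mul_comm (b i)]
  rw [intervalIntegral.integral_const_mul, integral_cos_mul_cos_two_pi_int_mul, if_neg hne]
  split_ifs <;> ring

lemma sum_sum_ite_eq_sum_sq_fiberwise {ι κ R : Type*} [CommSemiring R] [DecidableEq κ]
    (s : Finset ι) (k : ι → κ) (b : ι → R) :
    ∑ i ∈ s, ∑ j ∈ s, (if k i = k j then b i * b j else 0) =
      ∑ m ∈ s.image k, (∑ i ∈ s with k i = m, b i) ^ 2 := by
  symm
  calc ∑ m ∈ s.image k, (∑ i ∈ s with k i = m, b i) ^ 2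
      = ∑ m ∈ s.image k, ∑ i ∈ s with k i = m, ∑ j ∈ s with k i = k j, b i * b j := by
        refine sum_congr rfl fun m _ => ?_
        rw [sq, sum_mul_sum]
        refine sum_congr rfl fun i hi => ?_
        simp_rw [(mem_filter.1 hi).2, eq_comm]
    _ = ∑ i ∈ s, ∑ j ∈ s with k i = k j, b i * b j :=
        sum_fiberwise_of_maps_to (fun i hi => mem_image_of_mem k hi) _
    _ = _ := by simp_rw [sum_filter]

lemma eventually_half_mul_le_mul_add_of_isLittleO {e : ℕ → ℝ}
    (he : e =o[atTop] (fun n => (n : ℝ))) {s : ℝ} (hs : 0 < s) :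
    ∀ᶠ n : ℕ in atTop, s / 2 * n ≤ s * n + e n := by
  filter_upwards [he.def (half_pos hs)] with n hn
  rw [norm_natCast, Real.norm_eq_abs] at hn
  linarith [neg_abs_le (e n)]

lemma exists_pos_mul_le_of_eventually {u : ℕ → ℝ} {C₀ : ℝ} (hC₀ : 0 < C₀) (h0 : 0 ≤ u 0)
    (hpos : ∀ n, 0 < n → 0 < u n) (hev : ∀ᶠ n in atTop, C₀ * n ≤ u n) :
    ∃ C > 0, ∀ n : ℕ, C * n ≤ u n := by
  obtain ⟨N, hN⟩ := eventually_atTop.1 hev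
  set S := insert C₀ ((Icc 1 N).image fun n => u n / n)
  refine ⟨S.min' (insert_nonempty _ _), ?_, fun n => ?_⟩
  · obtain h | h := mem_insert.1 (S.min'_mem (insert_nonempty _ _))
    · rw [h]; exact hC₀
    · obtain ⟨n, hn, hn'⟩ := mem_image.1 h
      have hn1 : 0 < n := (mem_Icc.1 hn).1
      rw [← hn']
      exact div_pos (hpos n hn1) (by exact_mod_cast hn1)
  rcases Nat.eq_zero_or_pos n with rfl | hn
  · simpa using h0
  by_cases hNn : N ≤ n
  · calc S.min' _ * n ≤ C₀ * n := by gcongr; exact S.min'_le _ (mem_insert_self _ _)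
      _ ≤ u n := hN n hNn
  · have hmem : u n / n ∈ S := mem_insert_of_mem (mem_image_of_mem _ (mem_Icc.2 ⟨hn, by omega⟩))
    have hn' : (0 : ℝ) < n := by exact_mod_cast hn
    calc S.min' _ * n ≤ u n / n * n := by gcongr; exact S.min'_le _ hmem
      _ = u n := div_mul_cancel₀ _ hn'.ne'

noncomputable def coincidenceEnergy (c : ℤ → ℝ) (a : ℕ → ℕ) (D n : ℕ) : ℝ :=
  ∑ p ∈ Icc 1 n ×ˢ Icc (1 : ℤ) D, ∑ q ∈ Icc 1 n ×ˢ Icc (1 : ℤ) D,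
    if p.2 * a p.1 = q.2 * a q.1 then c p.2 * c q.2 else 0

def coincidenceCount (a : ℕ → ℕ) (d d' : ℤ) (n : ℕ) : ℕ :=
  #{p ∈ Icc 1 n ×ˢ Icc 1 n | p.1 ≠ p.2 ∧ d * a p.1 = d' * a p.2}

lemma integral_sq_sum_eq_two_mul_coincidenceEnergy {D : ℕ} {c : ℤ → ℝ} {f : ℝ → ℝ}
    (hf : ∀ x, f x = ∑ d ∈ Icc (1 : ℤ) D, 2 * c d * cos (2 * π * d * x))
    {a : ℕ → ℕ} (ha : ∀ j, 0 < a j) (n : ℕ) :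
    ∫ x in (0 : ℝ)..1, (∑ j ∈ Icc 1 n, f (a j * x)) ^ 2 = 2 * coincidenceEnergy c a D n := by
  have hS : ∀ x, ∑ j ∈ Icc 1 n, f (a j * x) = ∑ p ∈ Icc 1 n ×ˢ Icc (1 : ℤ) D,
      2 * c p.2 * cos (2 * π * (p.2 * a p.1 : ℤ) * x) := fun x => by
    rw [sum_product]
    refine sum_congr rfl fun j _ => ?_
    rw [hf]
    refine sum_congr rfl fun d _ => ?_
    push_cast
    ring_nf
  simp_rw [hS]
  rw [integral_sq_sum_cos_of_pos _ _ _ fun p hp => ?_, coincidenceEnergy, mul_sum, sum_div]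
  · refine sum_congr rfl fun p _ => ?_
    rw [mul_sum, sum_div]
    refine sum_congr rfl fun q _ => ?_
    split_ifs <;> ring
  · have hd : 0 < p.2 := (mem_Icc.1 (mem_product.1 hp).2).1
    exact mul_pos hd (by exact_mod_cast ha p.1)

lemma coincidenceEnergy_eq_mul_add_sum (c : ℤ → ℝ) {a : ℕ → ℕ} (ha : ∀ j, 0 < a j) (D n : ℕ) :
    coincidenceEnergy c a D n = n * ∑ d ∈ Icc (1 : ℤ) D, c d ^ 2 +
      ∑ d ∈ Icc (1 : ℤ) D, ∑ d' ∈ Icc (1 : ℤ) D, c d * c d' * coincidenceCount a d d' n := by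
  set F : ℕ × ℕ → ℝ := fun r => ∑ d ∈ Icc (1 : ℤ) D, ∑ d' ∈ Icc (1 : ℤ) D,
    if d * a r.1 = d' * a r.2 then c d * c d' else 0
  have hF : coincidenceEnergy c a D n = ∑ r ∈ Icc 1 n ×ˢ Icc 1 n, F r := by
    simp only [coincidenceEnergy, F, sum_product]
    exact sum_congr rfl fun _ _ => sum_comm
  have hdiag : ∀ j, F (j, j) = ∑ d ∈ Icc (1 : ℤ) D, c d ^ 2 := fun j => by
    have haj : (a j : ℤ) ≠ 0 := by exact_mod_cast (ha j).ne'
    simp only [F, mul_left_inj' haj]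
    exact sum_congr rfl fun d hd => by rw [sum_ite_eq, if_pos hd, sq]
  have hoff : ∑ r ∈ Icc 1 n ×ˢ Icc 1 n with r.1 ≠ r.2, F r =
      ∑ d ∈ Icc (1 : ℤ) D, ∑ d' ∈ Icc (1 : ℤ) D, c d * c d' * coincidenceCount a d d' n := by
    simp only [F]
    rw [sum_comm]
    refine sum_congr rfl fun d _ => ?_
    rw [sum_comm]
    refine sum_congr rfl fun d' _ => ?_
    rw [← sum_filter, sum_const, filter_filter, coincidenceCount, nsmul_eq_mul, mul_comm]
  have hon : ∑ r ∈ Icc 1 n ×ˢ Icc 1 n with r.1 = r.2, F r = n * ∑ d ∈ Icc (1 : ℤ) D, c d ^ 2 := by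
    rw [sum_filter, sum_product]
    rw [sum_congr rfl fun j hj => by rw [sum_ite_eq, if_pos hj, hdiag]]
    simp
  rw [hF, ← sum_filter_add_sum_filter_not _ (fun r : ℕ × ℕ => r.1 = r.2), hoff, hon]

lemma coincidenceEnergy_pos {c : ℤ → ℝ} {a : ℕ → ℕ} {D n : ℕ} (ha : ∀ j, 0 < a j)
    (hc : ∃ d ∈ Icc (1 : ℤ) D, c d ≠ 0) (hn : 0 < n) : 0 < coincidenceEnergy c a D n := by
  set T := Icc 1 n ×ˢ Icc (1 : ℤ) D
  set k : ℕ × ℤ → ℤ := fun p => p.2 * a p.1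
  obtain ⟨d₀, hd₀, hd₀max⟩ := exists_max_image {d ∈ Icc (1 : ℤ) D | c d ≠ 0} id
    (let ⟨d, hd, hcd⟩ := hc; ⟨d, mem_filter.2 ⟨hd, hcd⟩⟩)
  obtain ⟨hd₀, hcd₀⟩ := mem_filter.1 hd₀
  obtain ⟨j₀, hj₀, hj₀max⟩ := (Icc 1 n).exists_max_image a (nonempty_Icc.2 hn)
  have hp₀ : (j₀, d₀) ∈ T := mem_product.2 ⟨hj₀, hd₀⟩
  -- among terms with `c_d ≠ 0`, the frequency `d₀ · a_{j₀}` is attained only with `d = d₀`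
  have hfiber : ∀ p ∈ T, k p = k (j₀, d₀) → c p.2 ≠ 0 → p.2 = d₀ := by
    rintro ⟨j, d⟩ hp hk hcd
    obtain ⟨hj, hd⟩ := mem_product.1 hp
    have hdd₀ : d ≤ d₀ := hd₀max d (mem_filter.2 ⟨hd, hcd⟩)
    have haj : (a j : ℤ) ≤ a j₀ := by exact_mod_cast hj₀max j hj
    have haj_pos : (0 : ℤ) < a j := by exact_mod_cast ha j
    simp only [k, mem_Icc] at hk hd hd₀
    nlinarith
  set F := {p ∈ T | k p = k (j₀, d₀)}
  have hsum : ∑ p ∈ F, c p.2 = #{p ∈ F | p.2 = d₀} * c d₀ := by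
    rw [← nsmul_eq_mul, ← sum_const, sum_filter (fun p : ℕ × ℤ => p.2 = d₀)]
    refine sum_congr rfl fun p hp => ?_
    split_ifs with hpd
    · rw [hpd]
    · obtain ⟨hpT, hpk⟩ := mem_filter.1 hp
      by_contra hcp
      exact hpd (hfiber p hpT hpk hcp)
  have hcard : #{p ∈ F | p.2 = d₀} ≠ 0 :=
    card_ne_zero_of_mem (mem_filter.2 ⟨mem_filter.2 ⟨hp₀, rfl⟩, rfl⟩)
  rw [coincidenceEnergy, sum_sum_ite_eq_sum_sq_fiberwise T k (fun p => c p.2)]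
  refine sum_pos' (fun _ _ => sq_nonneg _) ⟨k (j₀, d₀), mem_image_of_mem k hp₀, ?_⟩
  rw [hsum]
  positivity

open Real Filter in
/-- If `f ≢ 0` is a real, even, centered trigonometric polynomial of degree `D` and the number
of off-diagonal solutions of `d a_ℓ = d' a_{ℓ'}` with `ℓ, ℓ' ∈ {1,…,n}` is `o(n)` for each
`d, d' ∈ {1,…,D}`, then there is `C > 0` with `E[S_n ^ 2] ≥ C n` for all `n`. -/
theorem stmt4 (D : ℕ) (c : ℤ → ℝ) (hsym : ∀ d, c (-d) = c d) (h0 : c 0 = 0)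
    (hne : ∃ d ∈ Finset.Icc (1:ℤ) D, c d ≠ 0)
    (f : ℝ → ℝ)
    (hf : ∀ x, f x = ∑ d ∈ Finset.Icc (-(D:ℤ)) D, c d * Real.cos (2 * π * d * x))
    (a : ℕ → ℕ) (hpos : ∀ n, 0 < a n)
    (hcount : ∀ d ∈ Finset.Icc (1:ℤ) D, ∀ d' ∈ Finset.Icc (1:ℤ) D,
      (fun n : ℕ => ((((Finset.Icc 1 n) ×ˢ (Finset.Icc 1 n)).filter
          (fun p : ℕ × ℕ => p.1 ≠ p.2 ∧ d * a p.1 = d' * a p.2)).card : ℝ))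
        =o[atTop] (fun n : ℕ => (n : ℝ))) :
    ∃ C > (0:ℝ), ∀ n : ℕ,
      C * n ≤ ∫ x in (0:ℝ)..1, (∑ j ∈ Finset.Icc 1 n, f (a j * x)) ^ 2 := by
  have hf' : ∀ x, f x = ∑ d ∈ Finset.Icc (1 : ℤ) D, 2 * c d * cos (2 * π * d * x) := fun x => by
    rw [hf, Finset.sum_Icc_neg_of_even (fun d => c d * cos (2 * π * d * x))
      (fun d => by rw [hsym, Int.cast_neg, mul_neg, neg_mul, cos_neg]) D]
    simp [h0, Finset.mul_sum, mul_assoc]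
  have henergy := integral_sq_sum_eq_two_mul_coincidenceEnergy hf' hpos
  set s := ∑ d ∈ Finset.Icc (1 : ℤ) D, c d ^ 2
  have hs : 0 < s := by
    obtain ⟨d, hd, hcd⟩ := hne
    exact Finset.sum_pos' (fun _ _ => sq_nonneg _) ⟨d, hd, by positivity⟩
  have hoff : (fun n => ∑ d ∈ Finset.Icc (1 : ℤ) D, ∑ d' ∈ Finset.Icc (1 : ℤ) D,
      c d * c d' * (coincidenceCount a d d' n : ℝ)) =o[atTop] (fun n => (n : ℝ)) :=
    .fun_sum fun d hd => .fun_sum fun d' hd' => (hcount d hd d' hd').const_mul_left _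
  refine exists_pos_mul_le_of_eventually hs (by simp) (fun n hn => ?_) ?_
  · rw [henergy]
    exact mul_pos two_pos (coincidenceEnergy_pos hpos hne hn)
  · filter_upwards [eventually_half_mul_le_mul_add_of_isLittleO hoff hs] with n hn
    rw [henergy, coincidenceEnergy_eq_mul_add_sum c hpos]
    linarith
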